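/- arXiv:2311.13180 — 3 statements merged into one kernel-verified Lean document; each statement's English description precedes it below -/
import Mathlib

section
/- Let Θ be a rank-r matrix in R^{d1×d2} with induced subspace pair (M, M̄⊥), and let Σ and Σ̂' be positive semidefinite d1d2 × d1d2 matrices. If Σ satisfies the matrix compatibility condition C(M, M̄⊥, φ1) for some φ1 > 0 and ||Σ̂' − Σ||_op ≤ φ1²/(4r), then Σ̂' satisfies the matrix compatibility condition C(M, M̄⊥, φ1/√2). -/
open MeasureTheory ProbabilityTheory Matrix Finset Real

namespace BanditPaper


instance matrixMeasurableSpace {m n : Type*} : MeasurableSpace (Matrix m n ℝ) :=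
  inferInstanceAs (MeasurableSpace (m → n → ℝ))

/-- Frobenius inner product of two matrices. -/
def finner {d1 d2 : ℕ} (A B : Matrix (Fin d1) (Fin d2) ℝ) : ℝ := ∑ i, ∑ j, A i j * B i j

/-- Frobenius norm. -/
noncomputable def frobNorm {d1 d2 : ℕ} (A : Matrix (Fin d1) (Fin d2) ℝ) : ℝ :=
  Real.sqrt (finner A A)

/-- Nuclear norm: the sum of the singular values. -/
noncomputable def nuclearNorm {d1 d2 : ℕ} (A : Matrix (Fin d1) (Fin d2) ℝ) : ℝ :=
  ∑ j, Real.sqrt ((show (Aᵀ * A).IsHermitian by simpa [Matrix.conjTranspose_eq_transpose_of_trivial] using Matrix.isHermitian_conjTranspose_mul_self A).eigenvalues j)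

/-- ℓ² operator norm: the largest singular value. -/
noncomputable def opNorm {m n : Type*} [Fintype m] [Fintype n] [DecidableEq n]
    (A : Matrix m n ℝ) : ℝ :=
  ⨆ j, Real.sqrt ((show (Aᵀ * A).IsHermitian by simpa [Matrix.conjTranspose_eq_transpose_of_trivial] using Matrix.isHermitian_conjTranspose_mul_self A).eigenvalues j)

/-- Column span of a matrix. -/
def colSpan {d1 d2 : ℕ} (A : Matrix (Fin d1) (Fin d2) ℝ) : Submodule ℝ (Fin d1 → ℝ) :=
  LinearMap.range A.mulVecLin

/-- Row span of a matrix. -/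
def rowSpan {d1 d2 : ℕ} (A : Matrix (Fin d1) (Fin d2) ℝ) : Submodule ℝ (Fin d2 → ℝ) :=
  LinearMap.range Aᵀ.mulVecLin

/-- Orthogonal complement of a subspace of `ℝ^n` (with respect to the dot product). -/
def vperp {n : Type*} [Fintype n] (S : Submodule ℝ (n → ℝ)) : Submodule ℝ (n → ℝ) where
  carrier := {v | ∀ w ∈ S, v ⬝ᵥ w = 0}
  add_mem' := by
    intro a b ha hb w hw
    simp only [Set.mem_setOf_eq] at ha hb ⊢
    simp [add_dotProduct, ha w hw, hb w hw]
  zero_mem' := by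
    intro w hw
    simp
  smul_mem' := by
    intro c a ha w hw
    simp only [Set.mem_setOf_eq] at ha ⊢
    simp [smul_dotProduct, ha w hw]

/-- The subspace `M(U, V)` of matrices with column span inside `U` and row span inside `V`. -/
def Mspace {d1 d2 : ℕ} (U : Submodule ℝ (Fin d1 → ℝ)) (V : Submodule ℝ (Fin d2 → ℝ)) :
    Set (Matrix (Fin d1) (Fin d2) ℝ) :=
  {A | colSpan A ≤ U ∧ rowSpan A ≤ V}

/-- The subspace `M̄⊥(U, V)`. -/
def MbarPerp {d1 d2 : ℕ} (U : Submodule ℝ (Fin d1 → ℝ)) (V : Submodule ℝ (Fin d2 → ℝ)) :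
    Set (Matrix (Fin d1) (Fin d2) ℝ) :=
  Mspace (vperp U) (vperp V)

/-- `P` is the Frobenius-orthogonal projection onto `M̄⊥(U, V)`; the projection onto `M̄(U,V)`
is then `id - P`. -/
def IsPerpProj {d1 d2 : ℕ} (U : Submodule ℝ (Fin d1 → ℝ)) (V : Submodule ℝ (Fin d2 → ℝ))
    (P : Matrix (Fin d1) (Fin d2) ℝ →ₗ[ℝ] Matrix (Fin d1) (Fin d2) ℝ) : Prop :=
  (∀ Δ, P Δ ∈ MbarPerp U V) ∧
  (∀ Δ, ∀ B ∈ MbarPerp U V, finner (Δ - P Δ) B = 0)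

/-- `(U, V)` is a subspace pair induced by a matrix `Θ` of rank at most `r`. -/
def InducedPair {d1 d2 : ℕ} (Θ : Matrix (Fin d1) (Fin d2) ℝ) (r : ℕ)
    (U : Submodule ℝ (Fin d1 → ℝ)) (V : Submodule ℝ (Fin d2 → ℝ)) : Prop :=
  Θ.rank ≤ r ∧ colSpan Θ ≤ U ∧ rowSpan Θ ≤ V ∧
    Module.finrank ℝ U = r ∧ Module.finrank ℝ V = r

/-- Vectorization of a matrix. -/
def vecM {d1 d2 : ℕ} (A : Matrix (Fin d1) (Fin d2) ℝ) : Fin d1 × Fin d2 → ℝ :=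
  fun p => A p.1 p.2

/-- The matrix compatibility condition `C(M, M̄⊥, φ)`. -/
def MatCompat {d1 d2 : ℕ} (U : Submodule ℝ (Fin d1 → ℝ)) (V : Submodule ℝ (Fin d2 → ℝ))
    (P : Matrix (Fin d1) (Fin d2) ℝ →ₗ[ℝ] Matrix (Fin d1) (Fin d2) ℝ) (φ : ℝ)
    (M' : Matrix (Fin d1 × Fin d2) (Fin d1 × Fin d2) ℝ) : Prop :=
  M'.PosSemidef ∧ ∀ Δ : Matrix (Fin d1) (Fin d2) ℝ,
    nuclearNorm (P Δ) ≤ 3 * nuclearNorm (Δ - P Δ) →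
    frobNorm (Δ - P Δ) ^ 2 ≤ vecM Δ ⬝ᵥ M'.mulVec (vecM Δ) / (4 * φ) ^ 2

/-- Nuclear-norm regularized least-squares estimator. -/
def IsNuclearEstimator {d1 d2 : ℕ} {ι : Type*} (A : Finset ι)
    (X : ι → Matrix (Fin d1) (Fin d2) ℝ) (r : ι → ℝ) (lam : ℝ)
    (Th : Matrix (Fin d1) (Fin d2) ℝ) : Prop :=
  ∀ Th' : Matrix (Fin d1) (Fin d2) ℝ,
    (∑ t ∈ A, (r t - finner (X t) Th) ^ 2) / A.card + lam * nuclearNorm Th ≤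
    (∑ t ∈ A, (r t - finner (X t) Th') ^ 2) / A.card + lam * nuclearNorm Th'

/-- The constant `C1(φ) = φ⁴/(96 r σ κ0)²` for the low-rank setting. -/
noncomputable def matC1 (r : ℕ) (σ κ0 φ : ℝ) : ℝ := φ ^ 4 / (96 * r * σ * κ0) ^ 2

/-- The constant `C2(φ) = φ²/(4 κ0 √(2r(4rκ0² + φ²)))` for the low-rank setting. -/
noncomputable def matC2 (r : ℕ) (κ0 φ : ℝ) : ℝ :=
  φ ^ 2 / (4 * κ0 * Real.sqrt (2 * r * (4 * r * κ0 ^ 2 + φ ^ 2)))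



/-!
Write `Δ_M̄ = Δ - P Δ`. Being orthogonal to every rank-one matrix `u vᵀ` with `u ⊥ U`, `v ⊥ V`,
`Δ_M̄` maps `V⊥` into `U`, so its rank is at most `2r` and `‖Δ_M̄‖_N ≤ √(2r) ‖Δ_M̄‖_F`. On the cone
this gives `‖P Δ‖_F ≤ ‖P Δ‖_N ≤ 3 √(2r) ‖Δ_M̄‖_F`, hence `‖Δ‖_F² ≤ (1 + 18r) ‖Δ_M̄‖_F²`.
The perturbation moves the quadratic form by at most
`‖Σ̂' - Σ‖_op ‖Δ‖_F² ≤ φ1² (1 + 18r) / (4r) ‖Δ_M̄‖_F² ≤ 8 φ1² ‖Δ_M̄‖_F²`,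
half of the `16 φ1² ‖Δ_M̄‖_F²` guaranteed by `C(M, M̄⊥, φ1)`.
-/

section QuadraticForm

variable {m n : Type*} [Fintype m]

lemma isHermitian_transpose_mul_self (A : Matrix m n ℝ) : (Aᵀ * A).IsHermitian := by
  simpa [conjTranspose_eq_transpose_of_trivial] using isHermitian_conjTranspose_mul_self A

variable [Fintype n]

lemma dotProduct_self_nonneg (x : n → ℝ) : 0 ≤ x ⬝ᵥ x :=
  Finset.sum_nonneg fun _ _ => mul_self_nonneg _

variable [DecidableEq n]

lemma eigenvalues_transpose_mul_self_nonneg (A : Matrix m n ℝ) (j : n) :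
    0 ≤ (isHermitian_transpose_mul_self A).eigenvalues j :=
  eigenvalues_conjTranspose_mul_self_nonneg A j

lemma sqrt_eigenvalues_le_opNorm (A : Matrix m n ℝ) (j : n) :
    √((isHermitian_transpose_mul_self A).eigenvalues j) ≤ opNorm A :=
  le_ciSup (f := fun j => √((isHermitian_transpose_mul_self A).eigenvalues j))
    (Set.finite_range _).bddAbove j

lemma opNorm_nonneg (A : Matrix m n ℝ) : 0 ≤ opNorm A :=
  Real.iSup_nonneg fun _ => Real.sqrt_nonneg _

open scoped MatrixOrder in
lemma dotProduct_transpose_mul_self_mulVec_le (A : Matrix m n ℝ) (x : n → ℝ) :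
    x ⬝ᵥ (Aᵀ * A) *ᵥ x ≤ opNorm A ^ 2 * (x ⬝ᵥ x) := by
  have hA := isHermitian_transpose_mul_self A
  have hle : Aᵀ * A ≤ algebraMap ℝ _ (opNorm A ^ 2) := by
    refine le_algebraMap_of_spectrum_le (fun μ hμ => ?_) hA.isSelfAdjoint
    obtain ⟨j, rfl⟩ := hA.spectrum_real_eq_range_eigenvalues ▸ hμ
    calc hA.eigenvalues j = √(hA.eigenvalues j) ^ 2 :=
          (Real.sq_sqrt (eigenvalues_transpose_mul_self_nonneg A j)).symm
      _ ≤ opNorm A ^ 2 := by gcongr; exact sqrt_eigenvalues_le_opNorm A j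
  have := (le_iff.mp hle).dotProduct_mulVec_nonneg x
  simpa [sub_mulVec, dotProduct_sub, Algebra.algebraMap_eq_smul_one, smul_mulVec,
    dotProduct_smul] using this

lemma abs_dotProduct_mulVec_le_opNorm (D : Matrix n n ℝ) (x : n → ℝ) :
    |x ⬝ᵥ D *ᵥ x| ≤ opNorm D * (x ⬝ᵥ x) := by
  have hcs : (x ⬝ᵥ D *ᵥ x) ^ 2 ≤ (x ⬝ᵥ x) * (D *ᵥ x ⬝ᵥ D *ᵥ x) := by
    simpa only [dotProduct, pow_two] using Finset.sum_mul_sq_le_sq_mul_sq Finset.univ x (D *ᵥ x)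
  have hD : D *ᵥ x ⬝ᵥ D *ᵥ x = x ⬝ᵥ (Dᵀ * D) *ᵥ x := by
    rw [← mulVec_mulVec, dotProduct_mulVec x, vecMul_transpose]
  have hxx := dotProduct_self_nonneg x
  refine abs_le_of_sq_le_sq ?_ (mul_nonneg (opNorm_nonneg D) hxx)
  calc (x ⬝ᵥ D *ᵥ x) ^ 2 ≤ (x ⬝ᵥ x) * (opNorm D ^ 2 * (x ⬝ᵥ x)) :=
        hcs.trans (by gcongr; exact hD ▸ dotProduct_transpose_mul_self_mulVec_le D x)
    _ = (opNorm D * (x ⬝ᵥ x)) ^ 2 := by ring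

lemma dotProduct_mulVec_sub_opNorm_le (A B : Matrix n n ℝ) (x : n → ℝ) :
    x ⬝ᵥ A *ᵥ x - opNorm (B - A) * (x ⬝ᵥ x) ≤ x ⬝ᵥ B *ᵥ x := by
  have hle := abs_dotProduct_mulVec_le_opNorm (B - A) x
  have hneg := neg_abs_le (x ⬝ᵥ (B - A) *ᵥ x)
  rw [sub_mulVec, dotProduct_sub] at hle hneg
  linarith

end QuadraticForm

section Orthogonal

variable {n : Type*} [Fintype n]

lemma exists_mem_sub_mem_vperp (S : Submodule ℝ (n → ℝ)) (x : n → ℝ) :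
    ∃ s ∈ S, x - s ∈ vperp S := by
  let K : Submodule ℝ (EuclideanSpace ℝ n) :=
    S.comap (WithLp.linearEquiv 2 ℝ (n → ℝ)).toLinearMap
  refine ⟨(K.starProjection (WithLp.toLp 2 x)).ofLp, K.starProjection_apply_mem _, fun w hw => ?_⟩
  have h := K.inner_right_of_mem_orthogonal (u := WithLp.toLp 2 w) hw
    (K.sub_starProjection_mem_orthogonal (WithLp.toLp 2 x))
  simpa [EuclideanSpace.inner_eq_star_dotProduct] using h

lemma vperp_vperp (S : Submodule ℝ (n → ℝ)) : vperp (vperp S) = S := by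
  refine le_antisymm (fun y hy => ?_) fun s hs w hw => dotProduct_comm s w ▸ hw s hs
  obtain ⟨s, hs, hys⟩ := exists_mem_sub_mem_vperp S y
  have hzero : (y - s) ⬝ᵥ (y - s) = 0 := by
    rw [sub_dotProduct, hy _ hys, dotProduct_comm s, hys s hs, sub_zero]
  simpa [sub_eq_zero.mp (dotProduct_self_eq_zero.mp hzero)] using hs

end Orthogonal

section Frobenius

variable {d1 d2 : ℕ}

lemma dotProduct_vecM (A B : Matrix (Fin d1) (Fin d2) ℝ) : vecM A ⬝ᵥ vecM B = finner A B := by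
  rw [dotProduct, Fintype.sum_prod_type]
  rfl

lemma frobNorm_nonneg (A : Matrix (Fin d1) (Fin d2) ℝ) : 0 ≤ frobNorm A := Real.sqrt_nonneg _

lemma frobNorm_sq (A : Matrix (Fin d1) (Fin d2) ℝ) : frobNorm A ^ 2 = finner A A :=
  Real.sq_sqrt (dotProduct_vecM A A ▸ dotProduct_self_nonneg _)

lemma finner_add_self_of_finner_eq_zero {A B : Matrix (Fin d1) (Fin d2) ℝ} (h : finner A B = 0) :
    finner (A + B) (A + B) = finner A A + finner B B := by
  simp only [← dotProduct_vecM] at h ⊢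
  have hvec : vecM (A + B) = vecM A + vecM B := rfl
  rw [hvec, add_dotProduct, dotProduct_add, dotProduct_add, dotProduct_comm (vecM B), h]
  ring

lemma finner_self_eq_sum_eigenvalues (A : Matrix (Fin d1) (Fin d2) ℝ) :
    finner A A = ∑ j, (isHermitian_transpose_mul_self A).eigenvalues j := by
  have htrace : finner A A = (Aᵀ * A).trace := by
    simp only [finner, Matrix.trace, Matrix.diag, mul_apply, transpose_apply]
    exact Finset.sum_comm
  simpa [htrace] using (isHermitian_transpose_mul_self A).trace_eq_sum_eigenvalues

lemma finner_self_eq_sum_sq_sqrt_eigenvalues (A : Matrix (Fin d1) (Fin d2) ℝ) :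
    finner A A = ∑ j, √((isHermitian_transpose_mul_self A).eigenvalues j) ^ 2 := by
  simp only [Real.sq_sqrt (eigenvalues_transpose_mul_self_nonneg A _),
    finner_self_eq_sum_eigenvalues]

lemma frobNorm_le_nuclearNorm (A : Matrix (Fin d1) (Fin d2) ℝ) : frobNorm A ≤ nuclearNorm A := by
  have hσ : ∀ j ∈ Finset.univ, 0 ≤ √((isHermitian_transpose_mul_self A).eigenvalues j) :=
    fun _ _ => Real.sqrt_nonneg _
  rw [frobNorm, finner_self_eq_sum_sq_sqrt_eigenvalues]
  exact (Real.sqrt_le_left (Finset.sum_nonneg hσ)).mpr (Finset.sum_sq_le_sq_sum_of_nonneg hσ)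

lemma nuclearNorm_le_sqrt_rank_mul_frobNorm (A : Matrix (Fin d1) (Fin d2) ℝ) :
    nuclearNorm A ≤ √A.rank * frobNorm A := by
  set μ := (isHermitian_transpose_mul_self A).eigenvalues
  set s := Finset.univ.filter fun j => μ j ≠ 0
  have hrank : A.rank = s.card := by
    rw [← rank_transpose_mul_self, (isHermitian_transpose_mul_self A).rank_eq_card_non_zero_eigs,
      Fintype.card_subtype]
  have hsupp : nuclearNorm A = ∑ j ∈ s, √(μ j) :=
    (Finset.sum_filter_of_ne (p := fun j => μ j ≠ 0)
      fun j _ h hj => h (by change √(μ j) = 0; rw [hj, Real.sqrt_zero])).symm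
  have hsq : nuclearNorm A ^ 2 ≤ A.rank * finner A A := by
    rw [hsupp, hrank, finner_self_eq_sum_sq_sqrt_eigenvalues]
    exact sq_sum_le_card_mul_sum_sq.trans (mul_le_mul_of_nonneg_left
      (Finset.sum_le_sum_of_subset_of_nonneg (Finset.subset_univ s) fun _ _ _ => sq_nonneg _)
      (Nat.cast_nonneg _))
  rw [frobNorm, ← Real.sqrt_mul (Nat.cast_nonneg _)]
  exact Real.le_sqrt_of_sq_le hsq

lemma finner_vecMulVec (A : Matrix (Fin d1) (Fin d2) ℝ) (u : Fin d1 → ℝ) (v : Fin d2 → ℝ) :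
    finner A (vecMulVec u v) = u ⬝ᵥ A *ᵥ v := by
  simp only [finner, vecMulVec_apply, dotProduct, mulVec, Finset.mul_sum]
  exact Finset.sum_congr rfl fun _ _ => Finset.sum_congr rfl fun _ _ => by ring

end Frobenius

section Decomposition

variable {d1 d2 : ℕ} {U : Submodule ℝ (Fin d1 → ℝ)} {V : Submodule ℝ (Fin d2 → ℝ)}

lemma colSpan_vecMulVec_le {S : Submodule ℝ (Fin d1 → ℝ)} {u : Fin d1 → ℝ} (hu : u ∈ S)
    (v : Fin d2 → ℝ) : colSpan (vecMulVec u v) ≤ S := by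
  rintro _ ⟨w, rfl⟩
  simpa [vecMulVec_mulVec] using S.smul_mem (v ⬝ᵥ w) hu

lemma vecMulVec_mem_mbarPerp {U : Submodule ℝ (Fin d1 → ℝ)} {V : Submodule ℝ (Fin d2 → ℝ)}
    {u : Fin d1 → ℝ} {v : Fin d2 → ℝ} (hu : u ∈ vperp U) (hv : v ∈ vperp V) :
    vecMulVec u v ∈ MbarPerp U V :=
  ⟨colSpan_vecMulVec_le hu v, by
    rw [rowSpan, transpose_vecMulVec]
    exact colSpan_vecMulVec_le hv u⟩

lemma mulVec_mem_of_forall_finner_eq_zero {A : Matrix (Fin d1) (Fin d2) ℝ}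
    (hA : ∀ B ∈ MbarPerp U V, finner A B = 0) {v : Fin d2 → ℝ} (hv : v ∈ vperp V) :
    A *ᵥ v ∈ U := by
  rw [← vperp_vperp U]
  intro u hu
  rw [dotProduct_comm, ← finner_vecMulVec]
  exact hA _ (vecMulVec_mem_mbarPerp hu hv)

/-- The range of `A` lies in `A V + U`, since `A` maps `V⊥` into `U`. -/
lemma rank_le_of_forall_finner_eq_zero {A : Matrix (Fin d1) (Fin d2) ℝ}
    (hA : ∀ B ∈ MbarPerp U V, finner A B = 0) :
    A.rank ≤ Module.finrank ℝ U + Module.finrank ℝ V := by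
  have hrange : LinearMap.range A.mulVecLin ≤ V.map A.mulVecLin ⊔ U := by
    rintro _ ⟨x, rfl⟩
    obtain ⟨v, hv, hxv⟩ := exists_mem_sub_mem_vperp V x
    rw [show x = v + (x - v) by abel, map_add]
    exact Submodule.add_mem_sup (Submodule.mem_map_of_mem hv)
      (mulVec_mem_of_forall_finner_eq_zero hA hxv)
  calc A.rank ≤ Module.finrank ℝ (V.map A.mulVecLin) + Module.finrank ℝ U :=
        (Submodule.finrank_mono hrange).trans (Submodule.finrank_add_le_finrank_add_finrank _ _)
    _ ≤ Module.finrank ℝ V + Module.finrank ℝ U := by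
        gcongr; exact Submodule.finrank_map_le _ _
    _ = Module.finrank ℝ U + Module.finrank ℝ V := add_comm _ _

lemma finner_self_le_of_nuclearNorm_le
    {P : Matrix (Fin d1) (Fin d2) ℝ →ₗ[ℝ] Matrix (Fin d1) (Fin d2) ℝ} (hP : IsPerpProj U V P)
    {c : ℝ} (hc : 0 ≤ c) {Δ : Matrix (Fin d1) (Fin d2) ℝ}
    (hcone : nuclearNorm (P Δ) ≤ c * nuclearNorm (Δ - P Δ)) :
    finner Δ Δ ≤
      (1 + c ^ 2 * (Module.finrank ℝ U + Module.finrank ℝ V)) * frobNorm (Δ - P Δ) ^ 2 := by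
  have hrank : ((Δ - P Δ).rank : ℝ) ≤ Module.finrank ℝ U + Module.finrank ℝ V := by
    exact_mod_cast rank_le_of_forall_finner_eq_zero (hP.2 Δ)
  set k : ℝ := Module.finrank ℝ U + Module.finrank ℝ V
  have hPΔ : frobNorm (P Δ) ≤ c * √k * frobNorm (Δ - P Δ) :=
    calc frobNorm (P Δ) ≤ c * nuclearNorm (Δ - P Δ) := (frobNorm_le_nuclearNorm _).trans hcone
      _ ≤ c * (√k * frobNorm (Δ - P Δ)) := by
          gcongr
          exact (nuclearNorm_le_sqrt_rank_mul_frobNorm _).trans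
            (mul_le_mul_of_nonneg_right (Real.sqrt_le_sqrt hrank) (frobNorm_nonneg _))
      _ = c * √k * frobNorm (Δ - P Δ) := by ring
  have hpyth : finner Δ Δ = frobNorm (Δ - P Δ) ^ 2 + frobNorm (P Δ) ^ 2 := by
    rw [frobNorm_sq, frobNorm_sq, ← finner_add_self_of_finner_eq_zero (hP.2 Δ _ (hP.1 Δ)),
      sub_add_cancel]
  calc finner Δ Δ ≤ frobNorm (Δ - P Δ) ^ 2 + (c * √k * frobNorm (Δ - P Δ)) ^ 2 := by
        rw [hpyth]; gcongr; exact frobNorm_nonneg _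
    _ = (1 + c ^ 2 * k) * frobNorm (Δ - P Δ) ^ 2 := by
        rw [mul_pow, mul_pow, Real.sq_sqrt (by positivity)]; ring

end Decomposition

theorem matcompat_stable_under_perturbation_general
    {d1 d2 r : ℕ} (hr : 1 ≤ r) (φ1 : ℝ) (hφ1 : 0 < φ1)
    (Θ : Matrix (Fin d1) (Fin d2) ℝ)
    (U : Submodule ℝ (Fin d1 → ℝ)) (V : Submodule ℝ (Fin d2 → ℝ))
    (P : Matrix (Fin d1) (Fin d2) ℝ →ₗ[ℝ] Matrix (Fin d1) (Fin d2) ℝ)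
    (hUV : InducedPair Θ r U V) (hP : IsPerpProj U V P)
    (Sig SigHat : Matrix (Fin d1 × Fin d2) (Fin d1 × Fin d2) ℝ)
    (hSigHatPSD : SigHat.PosSemidef)
    (hcompat : MatCompat U V P φ1 Sig)
    (hclose : opNorm (SigHat - Sig) ≤ φ1 ^ 2 / (4 * r)) :
    MatCompat U V P (φ1 / Real.sqrt 2) SigHat := by
  refine ⟨hSigHatPSD, fun Δ hcone => ?_⟩
  set a := frobNorm (Δ - P Δ)
  set x := vecM Δ
  have hr' : (1 : ℝ) ≤ r := by exact_mod_cast hr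
  have hΔ : x ⬝ᵥ x ≤ (1 + 18 * r) * a ^ 2 := by
    have h := finner_self_le_of_nuclearNorm_le hP (by norm_num) hcone
    rw [hUV.2.2.2.1, hUV.2.2.2.2] at h
    rw [dotProduct_vecM]
    linarith
  have hSig : 16 * φ1 ^ 2 * a ^ 2 ≤ x ⬝ᵥ Sig *ᵥ x := by
    have h := hcompat.2 Δ hcone
    rw [le_div_iff₀ (by positivity)] at h
    linarith
  have hpert : opNorm (SigHat - Sig) * (x ⬝ᵥ x) ≤ 8 * φ1 ^ 2 * a ^ 2 :=
    calc opNorm (SigHat - Sig) * (x ⬝ᵥ x) ≤ φ1 ^ 2 / (4 * r) * ((1 + 18 * r) * a ^ 2) :=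
          mul_le_mul hclose hΔ (dotProduct_self_nonneg x) (by positivity)
      _ = φ1 ^ 2 * a ^ 2 * ((1 + 18 * r) / (4 * r)) := by ring
      _ ≤ φ1 ^ 2 * a ^ 2 * 8 := by
          gcongr
          rw [div_le_iff₀ (by positivity)]
          linarith
      _ = 8 * φ1 ^ 2 * a ^ 2 := by ring
  have hden : (4 * (φ1 / √2)) ^ 2 = 8 * φ1 ^ 2 := by
    rw [mul_pow, div_pow, Real.sq_sqrt zero_le_two]; ring
  rw [hden, le_div_iff₀ (by positivity)]
  linarith [dotProduct_mulVec_sub_opNorm_le Sig SigHat x]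

/-- the matrix compatibility condition is stable under operator-norm
perturbations (Lemma C.5 / `lemi03` of the paper). -/
theorem matcompat_stable_under_perturbation
    {d1 d2 r : ℕ} (hr : 1 ≤ r) (φ1 : ℝ) (hφ1 : 0 < φ1)
    (Θ : Matrix (Fin d1) (Fin d2) ℝ)
    (U : Submodule ℝ (Fin d1 → ℝ)) (V : Submodule ℝ (Fin d2 → ℝ))
    (P : Matrix (Fin d1) (Fin d2) ℝ →ₗ[ℝ] Matrix (Fin d1) (Fin d2) ℝ)
    (hUV : InducedPair Θ r U V) (hP : IsPerpProj U V P)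
    (Sig SigHat : Matrix (Fin d1 × Fin d2) (Fin d1 × Fin d2) ℝ)
    (hSigPSD : Sig.PosSemidef) (hSigHatPSD : SigHat.PosSemidef)
    (hcompat : MatCompat U V P φ1 Sig)
    (hclose : opNorm (SigHat - Sig) ≤ φ1 ^ 2 / (4 * r)) :
    MatCompat U V P (φ1 / Real.sqrt 2) SigHat :=
  matcompat_stable_under_perturbation_general hr φ1 hφ1 Θ U V P hUV hP Sig SigHat hSigHatPSD hcompat
    hclose

end BanditPaper
end

section
/- Let B_1, ..., B_t be independent Bernoulli random variables with P(B_τ = 1) = min{1, t0/τ}/K, and set n_k = Σ_{τ=1}^t B_τ. Suppose C0 ≥ 10, t0 = 2 C0 K, and t ≥ (t0+1)²/e² − 1. Then with probability at least 1 − 2/(t+1), C0 (1 + log(t+1) − log(t0+1)) ≤ n_k ≤ 3 C0 (1 + log t − log t0). -/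
/-!
The count is a sum of independent Bernoulli variables with mean
`m = ∑ τ ≤ t, min 1 (t0 / τ) / K = 2 C0 (1 + ∑ t0 < τ ≤ t, 1 / τ)`. Comparing this harmonic sum
with `∫ dx / x` gives `2 C0 (1 + log (t + 1) - log (t0 + 1)) ≤ m ≤ 2 C0 (1 + log t - log t0)`,
so the count leaves the interval only if it is at most `m / 2` or at least `3 m / 2`.
The moment generating function of the count is at most `exp ((exp c - 1) m)`, so the Chernoff
bound at `c = -log 2` and at `c = log (3 / 2)` gives each of these events probability at most
`exp (-m / 10)`, and the assumption on `t` is what makes `m / 10 ≥ log (t + 1)`.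
-/

open MeasureTheory ProbabilityTheory Finset Real

lemma log_sub_log_le_sum_Ioc_inv {a b : ℕ} (hab : a ≤ b) :
    log (b + 1) - log (a + 1) ≤ ∑ n ∈ Ioc a b, (n : ℝ)⁻¹ := by
  have hanti : AntitoneOn (fun x : ℝ => x⁻¹) (Set.Icc ((a + 1 : ℕ) : ℝ) (b + 1 : ℕ)) :=
    inv_antitoneOn_Icc_right (by positivity)
  have := hanti.integral_le_sum_Ico (by omega)
  rw [integral_inv (by simp [Set.uIcc_of_le, hab]; intro h; linarith),
    Ico_add_one_add_one_eq_Ioc, log_div (by positivity) (by positivity)] at this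
  exact_mod_cast this

lemma sum_Ioc_inv_le_log_sub_log {a b : ℕ} (ha : 0 < a) (hab : a ≤ b) :
    ∑ n ∈ Ioc a b, (n : ℝ)⁻¹ ≤ log b - log a := by
  have hanti : AntitoneOn (fun x : ℝ => x⁻¹) (Set.Icc (a : ℝ) b) :=
    inv_antitoneOn_Icc_right (by positivity)
  have := hanti.sum_le_integral_Ico hab
  rw [integral_inv (by simp [Set.uIcc_of_le, hab]; omega),
    log_div (by norm_cast; omega) (by norm_cast; omega)] at this
  rwa [← Ico_add_one_add_one_eq_Ioc, ← sum_Ico_add']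

lemma sum_Icc_min_one_div_eq {a b : ℕ} (hab : a ≤ b) :
    ∑ n ∈ Icc 1 b, min 1 ((a : ℝ) / n) = a * (1 + ∑ n ∈ Ioc a b, (n : ℝ)⁻¹) := by
  rw [show Icc 1 b = Ioc 0 b from Icc_add_one_left_eq_Ioc 0 b,
    ← sum_Ioc_consecutive _ (Nat.zero_le a) hab, mul_add, mul_one, mul_sum]
  congr 1
  · rw [sum_congr rfl fun n hn => min_eq_left ?_]
    · simp
    · rw [mem_Ioc] at hn
      exact (one_le_div (by exact_mod_cast hn.1)).2 (by exact_mod_cast hn.2)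
  · refine sum_congr rfl fun n hn => ?_
    rw [mem_Ioc] at hn
    have hn0 : (0 : ℝ) < n := by exact_mod_cast (Nat.zero_le a).trans_lt hn.1
    rw [min_eq_right ((div_le_one hn0).2 (by exact_mod_cast hn.1.le)), div_eq_mul_inv]

lemma sum_Icc_min_one_div_bounds {a b : ℕ} (ha : 0 < a) (hab : a ≤ b) :
    a * (1 + log (b + 1) - log (a + 1)) ≤ ∑ n ∈ Icc 1 b, min 1 ((a : ℝ) / n) ∧
      ∑ n ∈ Icc 1 b, min 1 ((a : ℝ) / n) ≤ a * (1 + log b - log a) := by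
  rw [sum_Icc_min_one_div_eq hab]
  have ha' : (0 : ℝ) ≤ a := a.cast_nonneg
  constructor
  · nlinarith [log_sub_log_le_sum_Ioc_inv hab]
  · nlinarith [sum_Ioc_inv_le_log_sub_log ha hab]

lemma two_fifths_le_log_three_halves : 2 / 5 ≤ log (3 / 2) := by
  rw [le_log_iff_exp_le (by norm_num)]
  refine (exp_bound' (x := 2 / 5) (by norm_num) (by norm_num) (n := 3) (by norm_num)).trans ?_
  norm_num [sum_range_succ, Nat.factorial]

lemma sq_le_exp_one_sq_mul_of_sq_div_sub_one_le {x y : ℝ} (h : x ^ 2 / exp 1 ^ 2 - 1 ≤ y) :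
    x ^ 2 ≤ exp 1 ^ 2 * (y + 1) := by
  rw [div_sub_one (by positivity), div_le_iff₀ (by positivity)] at h
  linarith

lemma two_mul_log_le_two_add_log {x y : ℝ} (hx : 0 < x) (h : x ^ 2 ≤ exp 1 ^ 2 * (y + 1)) :
    2 * log x ≤ 2 + log (y + 1) := by
  have hy : 0 < y + 1 := pos_of_mul_pos_right ((pow_pos hx 2).trans_le h) (by positivity)
  calc 2 * log x = log (x ^ 2) := by rw [log_pow, Nat.cast_ofNat]
    _ ≤ log (exp 1 ^ 2 * (y + 1)) := log_le_log (by positivity) h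
    _ = 2 + log (y + 1) := by
      rw [log_mul (by positivity) hy.ne', log_pow, log_exp, Nat.cast_ofNat, mul_one]

lemma le_add_one_of_sq_le_exp_one_sq_mul {x y : ℝ} (hx : exp 1 ^ 2 ≤ x)
    (h : x ^ 2 ≤ exp 1 ^ 2 * (y + 1)) : x ≤ y + 1 := by
  have he : 0 < exp 1 ^ 2 := by positivity
  refine le_of_mul_le_mul_left ?_ he
  nlinarith [mul_le_mul_of_nonneg_right hx (he.le.trans hx)]

section Bernoulli

variable {Ω ι : Type*} [MeasurableSpace Ω] {μ : Measure Ω}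

lemma measurable_ite_bool {b : Ω → Bool} (hb : Measurable b) :
    Measurable fun ω => if b ω then (1 : ℝ) else 0 :=
  Measurable.ite (hb (measurableSet_singleton true)) measurable_const measurable_const

lemma ProbabilityTheory.iIndepFun.ite_bool {B : ι → Ω → Bool} (hindep : iIndepFun B μ) :
    iIndepFun (fun i ω => if B i ω then (1 : ℝ) else 0) μ :=
  hindep.comp (fun _ b => if b then (1 : ℝ) else 0) fun _ => Measurable.of_discrete

variable [IsProbabilityMeasure μ] {B : ι → Ω → Bool}

lemma mgf_ite_bool {b : Ω → Bool} (hb : Measurable b) (c : ℝ) :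
    mgf (fun ω => if b ω then (1 : ℝ) else 0) μ c =
      1 + (exp c - 1) * μ.real {ω | b ω = true} := by
  have hs : MeasurableSet {ω | b ω = true} := hb (measurableSet_singleton true)
  have hexp : (fun ω => exp (c * if b ω then (1 : ℝ) else 0)) =
      fun ω => 1 + (exp c - 1) * {ω | b ω = true}.indicator 1 ω := by
    funext ω
    by_cases h : b ω <;> simp [h]
  rw [mgf, hexp, integral_add (integrable_const 1) ((integrable_indicator_iff hs).2
    (integrable_const 1).integrableOn |>.const_mul _), integral_const_mul,
    integral_indicator_one hs]
  simp

lemma mgf_sum_ite_bool_le (hB : ∀ i, Measurable (B i)) (hindep : iIndepFun B μ)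
    (s : Finset ι) (c : ℝ) :
    mgf (fun ω => ∑ i ∈ s, if B i ω then (1 : ℝ) else 0) μ c ≤
      exp ((exp c - 1) * ∑ i ∈ s, μ.real {ω | B i ω = true}) := by
  have hsum : (fun ω => ∑ i ∈ s, if B i ω then (1 : ℝ) else 0) =
      ∑ i ∈ s, fun ω => if B i ω then (1 : ℝ) else 0 := by
    funext ω; simp
  rw [hsum, hindep.ite_bool.mgf_sum (fun i => measurable_ite_bool (hB i)), mul_sum, exp_sum]
  refine prod_le_prod (fun i _ => mgf_nonneg) fun i _ => ?_
  rw [mgf_ite_bool (hB i)]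
  exact add_one_le_exp _ |>.trans_eq' (add_comm _ _)

lemma integrable_exp_mul_sum_ite_bool (hB : ∀ i, Measurable (B i)) (hindep : iIndepFun B μ)
    (s : Finset ι) (c : ℝ) :
    Integrable (fun ω => exp (c * ∑ i ∈ s, if B i ω then (1 : ℝ) else 0)) μ := by
  have hexp (i : ι) : Integrable (fun ω => exp (c * if B i ω then (1 : ℝ) else 0)) μ :=
    (Integrable.of_finite (f := fun b : Bool => exp (c * if b then (1 : ℝ) else 0))).comp_measurable
      (hB i)
  simpa using hindep.ite_bool.integrable_exp_mul_sum (fun i => measurable_ite_bool (hB i))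
    (s := s) (t := c) fun i _ => hexp i

lemma measureReal_sum_ite_bool_le_le (hB : ∀ i, Measurable (B i)) (hindep : iIndepFun B μ)
    (s : Finset ι) {a : ℝ} (ha : a ≤ (∑ i ∈ s, μ.real {ω | B i ω = true}) / 2) :
    μ.real {ω | ∑ i ∈ s, (if B i ω then (1 : ℝ) else 0) ≤ a} ≤
      exp (-((∑ i ∈ s, μ.real {ω | B i ω = true}) / 10)) := by
  set m := ∑ i ∈ s, μ.real {ω | B i ω = true}
  have hm : 0 ≤ m := sum_nonneg fun i _ => measureReal_nonneg
  have hmgf := mgf_sum_ite_bool_le hB hindep s (-log 2)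
  rw [exp_neg, exp_log two_pos] at hmgf
  calc _ ≤ exp (-(-log 2) * a) *
        mgf (fun ω => ∑ i ∈ s, if B i ω then (1 : ℝ) else 0) μ (-log 2) :=
        measure_le_le_exp_mul_mgf a (neg_nonpos.2 (log_nonneg one_le_two))
          (integrable_exp_mul_sum_ite_bool hB hindep s _)
    _ ≤ exp (log 2 * a) * exp ((2⁻¹ - 1) * m) := by
        rw [neg_neg]; gcongr
    _ ≤ exp (-(m / 10)) := by
        rw [← exp_add, exp_le_exp]
        nlinarith [log_two_lt_d9, log_nonneg one_le_two]

lemma measureReal_le_sum_ite_bool_le (hB : ∀ i, Measurable (B i)) (hindep : iIndepFun B μ)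
    (s : Finset ι) {a : ℝ} (ha : 3 * (∑ i ∈ s, μ.real {ω | B i ω = true}) / 2 ≤ a) :
    μ.real {ω | a ≤ ∑ i ∈ s, (if B i ω then (1 : ℝ) else 0)} ≤
      exp (-((∑ i ∈ s, μ.real {ω | B i ω = true}) / 10)) := by
  set m := ∑ i ∈ s, μ.real {ω | B i ω = true}
  have hm : 0 ≤ m := sum_nonneg fun i _ => measureReal_nonneg
  have hmgf := mgf_sum_ite_bool_le hB hindep s (log (3 / 2))
  rw [exp_log (by norm_num)] at hmgf
  calc _ ≤ exp (-log (3 / 2) * a) *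
        mgf (fun ω => ∑ i ∈ s, if B i ω then (1 : ℝ) else 0) μ (log (3 / 2)) :=
        measure_ge_le_exp_mul_mgf a (log_nonneg (by norm_num))
          (integrable_exp_mul_sum_ite_bool hB hindep s _)
    _ ≤ exp (-log (3 / 2) * a) * exp ((3 / 2 - 1) * m) := by gcongr
    _ ≤ exp (-(m / 10)) := by
        rw [← exp_add, exp_le_exp]
        nlinarith [two_fifths_le_log_three_halves]

end Bernoulli

lemma ofReal_one_sub_two_mul_le_measure {Ω : Type*} [MeasurableSpace Ω] {μ : Measure Ω}
    [IsProbabilityMeasure μ] {f : Ω → ℝ} {a b ε : ℝ}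
    (hlow : μ.real {ω | f ω ≤ a} ≤ ε) (hhigh : μ.real {ω | b ≤ f ω} ≤ ε) :
    ENNReal.ofReal (1 - 2 * ε) ≤ μ {ω | a ≤ f ω ∧ f ω ≤ b} := by
  set G := {ω | a ≤ f ω ∧ f ω ≤ b}
  have hcompl : Gᶜ ⊆ {ω | f ω ≤ a} ∪ {ω | b ≤ f ω} := by
    intro ω hω
    simp only [G, Set.mem_compl_iff, Set.mem_ofPred_eq, not_and_or, not_le] at hω
    exact hω.imp le_of_lt le_of_lt
  have hunion : 1 ≤ μ.real G + μ.real Gᶜ := by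
    simpa [Set.union_compl_self] using measureReal_union_le (μ := μ) G Gᶜ
  rw [← ofReal_measureReal]
  gcongr
  linarith [measureReal_mono (μ := μ) hcompl,
    measureReal_union_le (μ := μ) {ω | f ω ≤ a} {ω | b ≤ f ω}]

namespace BanditPaper

/-- upper and lower bounds on the number of forced samples of a given arm
under the ε-decay forced sampling method (Lemma D.1 / Proposition 2 of Wang et al.,
as restated in the paper). -/
theorem forced_sample_size_bounds
    {Ω : Type*} [mΩ : MeasurableSpace Ω] (μ : Measure Ω) [IsProbabilityMeasure μ]
    (K t t0 : ℕ) (C0 : ℝ) (hK : 2 ≤ K) (hC0 : 10 ≤ C0)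
    (ht0 : (t0 : ℝ) = 2 * C0 * K)
    (ht : ((t0 : ℝ) + 1) ^ 2 / Real.exp 1 ^ 2 - 1 ≤ (t : ℝ))
    (B : ℕ → Ω → Bool) (hBmeas : ∀ τ, Measurable (B τ))
    (hBindep : iIndepFun B μ)
    (hB : ∀ τ ∈ Finset.Icc 1 t,
      μ {ω | B τ ω = true} = ENNReal.ofReal (min 1 ((t0 : ℝ) / τ) / K)) :
    ENNReal.ofReal (1 - 2 / ((t : ℝ) + 1)) ≤
      μ {ω | C0 * (1 + Real.log ((t : ℝ) + 1) - Real.log ((t0 : ℝ) + 1)) ≤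
            (∑ τ ∈ Finset.Icc 1 t, if B τ ω then (1 : ℝ) else 0) ∧
          (∑ τ ∈ Finset.Icc 1 t, if B τ ω then (1 : ℝ) else 0) ≤
            3 * C0 * (1 + Real.log t - Real.log t0)} := by
  have hK2 : (2 : ℝ) ≤ K := by exact_mod_cast hK
  have ht0_ge : (40 : ℝ) ≤ t0 := by rw [ht0]; nlinarith
  have hsq := sq_le_exp_one_sq_mul_of_sq_div_sub_one_le ht
  have hlog := two_mul_log_le_two_add_log (by positivity) hsq
  have ht0t : t0 ≤ t := by
    exact_mod_cast le_of_add_le_add_right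
      (le_add_one_of_sq_le_exp_one_sq_mul (by nlinarith [exp_one_lt_three, exp_pos 1]) hsq)
  have hprob : ∀ τ ∈ Icc 1 t,
      μ.real {ω | B τ ω = true} = 2 * C0 / t0 * min 1 ((t0 : ℝ) / τ) := fun τ hτ => by
    rw [measureReal_def, hB τ hτ, ENNReal.toReal_ofReal (by positivity), ht0]
    field_simp
  obtain ⟨hsum_lb, hsum_ub⟩ :=
    sum_Icc_min_one_div_bounds (by exact_mod_cast (by linarith : (0 : ℝ) < t0)) ht0t
  set m := ∑ τ ∈ Icc 1 t, μ.real {ω | B τ ω = true} with hm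
  rw [sum_congr rfl hprob, ← mul_sum, div_mul_eq_mul_div] at hm
  have hm_lb : 2 * C0 * (1 + log (t + 1) - log (t0 + 1)) ≤ m := by
    rw [hm, le_div_iff₀ (by positivity)]; nlinarith
  have hm_ub : m ≤ 2 * C0 * (1 + log t - log t0) := by
    rw [hm, div_le_iff₀ (by positivity)]; nlinarith
  have hexp : exp (-(m / 10)) ≤ 1 / (t + 1) := by
    rw [one_div, ← exp_log (by positivity : (0 : ℝ) < t + 1), ← exp_neg, exp_le_exp]
    nlinarith [log_nonneg (by linarith : (1 : ℝ) ≤ t + 1)]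
  rw [← mul_one_div]
  exact ofReal_one_sub_two_mul_le_measure
    ((measureReal_sum_ite_bool_le_le hBmeas hBindep _ (by linarith)).trans hexp)
    ((measureReal_le_sum_ite_bool_le hBmeas hBindep _ (by linarith)).trans hexp)

end BanditPaper
end

section
/- Consider the ε-decay forced-sampling model for arm k: n_k = Σ_{τ=1}^{t_l} B_τ, where B_1, ..., B_{t_l} are independent Bernoulli variables with P(B_τ = 1) = min{1, t0/τ}/K; the covariates attached to the n_k forced samples are i.i.d. from a distribution P_X, and V is a region with P_X(X ∈ V) ≥ p*; let |A'| denote the number of the n_k forced samples whose covariate lies in V. Suppose t0 = 2 C0 K with C0 = max{10, 8/p*}, and t_l ≥ (t0+1)²/e² − 1. Then: (1) P( n_k < C0 log(t_l+1)/2 or n_k > 6 C0 log(t_l+1) ) ≤ 2/(t_l+1); (2) P( |A'| < p* C0 log(t_l+1)/2 ) ≤ 1/(t_l+1); (3) P( |A'|/n_k < p*/12 ) ≤ 3/(t_l+1). -/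
/-!
The number `n_k` of forced samples is a sum of independent indicators with mean
`∑_{τ ≤ t_l} min(1, t₀/τ)/K = 2 C₀ (1 + ∑_{t₀ < τ ≤ t_l} 1/τ)`; comparing the harmonic sum with
`log` places it between `C₀ log(t_l+1)` and `2 C₀ log(t_l+1)` (the lower end is where the
assumption on `t_l` enters). The forced samples landing in `V` are again independent indicators,
with mean at least `p* C₀ log(t_l+1)`. Multiplicative Chernoff bounds (the `mgf` at `t = -1` for
the lower tails, `t = 1` for the upper one) bound each tail by `exp(-c log(t_l+1))` with `c ≥ 1`,
since `C₀ ≥ 8` and `p* C₀ ≥ 8`. Outside these three events `|A'|/n_k ≥ p*/12`, which gives (3).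
-/

open MeasureTheory ProbabilityTheory Finset Real

namespace BanditPaper

lemma log_sub_log_le_sum_Ioc_inv {a b : ℕ} (hab : a ≤ b) :
    log (b + 1) - log (a + 1) ≤ ∑ τ ∈ Ioc a b, (τ : ℝ)⁻¹ := by
  have hanti : AntitoneOn (fun x : ℝ => x⁻¹) (Set.Icc ((a + 1 : ℕ) : ℝ) ((b + 1 : ℕ) : ℝ)) :=
    fun x hx y _ hxy => inv_anti₀ (by simp at hx; linarith [hx.1]) hxy
  have h := hanti.integral_le_sum_Ico (by omega)
  rw [integral_inv_of_pos (by positivity) (by positivity), Finset.Ico_add_one_add_one_eq_Ioc] at h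
  rw [← log_div (by positivity) (by positivity)]
  exact_mod_cast h

lemma sum_Ioc_inv_le_log_sub_log {a b : ℕ} (ha : 0 < a) (hab : a ≤ b) :
    ∑ τ ∈ Ioc a b, (τ : ℝ)⁻¹ ≤ log b - log a := by
  have ha' : (0 : ℝ) < a := by exact_mod_cast ha
  have hb' : (0 : ℝ) < b := ha'.trans_le (by exact_mod_cast hab)
  have hanti : AntitoneOn (fun x : ℝ => x⁻¹) (Set.Icc (a : ℝ) b) :=
    fun x hx y _ hxy => inv_anti₀ (ha'.trans_le hx.1) hxy
  have h := hanti.sum_le_integral_Ico hab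
  rw [integral_inv_of_pos ha' hb',
    Finset.sum_Ico_add' (fun i : ℕ => ((i : ℝ))⁻¹), Finset.Ico_add_one_add_one_eq_Ioc] at h
  rwa [← log_div hb'.ne' ha'.ne']

lemma sum_Icc_min_one_div_eq {t0 tl : ℕ} (ht0 : t0 ≤ tl) :
    ∑ τ ∈ Icc 1 tl, min 1 ((t0 : ℝ) / τ) = t0 * (1 + ∑ τ ∈ Ioc t0 tl, (τ : ℝ)⁻¹) := by
  have hhead : ∀ τ ∈ Ioc 0 t0, min 1 ((t0 : ℝ) / τ) = 1 := fun τ hτ => by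
    obtain ⟨hτ0, hτt⟩ := mem_Ioc.mp hτ
    exact min_eq_left ((one_le_div (by positivity)).mpr (by exact_mod_cast hτt))
  have htail : ∀ τ ∈ Ioc t0 tl, min 1 ((t0 : ℝ) / τ) = t0 * (τ : ℝ)⁻¹ := fun τ hτ => by
    obtain ⟨hτ0, -⟩ := mem_Ioc.mp hτ
    rw [← div_eq_mul_inv]
    have hτ : (0 : ℝ) < τ := by exact_mod_cast (Nat.zero_le _).trans_lt hτ0
    exact min_eq_right ((div_le_one hτ).mpr (by exact_mod_cast hτ0.le))
  rw [← zero_add 1, Icc_add_one_left_eq_Ioc, ← sum_Ioc_consecutive _ (Nat.zero_le t0) ht0,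
    sum_congr rfl hhead, sum_congr rfl htail, ← mul_sum]
  simp [mul_add]

lemma le_of_sq_div_exp_sq_sub_one_le {t0 tl : ℕ} (ht0 : 7 ≤ t0)
    (htl : ((t0 : ℝ) + 1) ^ 2 / exp 1 ^ 2 - 1 ≤ tl) : t0 ≤ tl := by
  have he : exp 1 ^ 2 ≤ (t0 : ℝ) + 1 := by
    have : (7 : ℝ) ≤ t0 := by exact_mod_cast ht0
    nlinarith [exp_one_lt_d9, exp_pos 1]
  have : (t0 : ℝ) + 1 ≤ ((t0 : ℝ) + 1) ^ 2 / exp 1 ^ 2 := by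
    rw [le_div_iff₀ (by positivity)]
    nlinarith
  exact_mod_cast (by linarith : (t0 : ℝ) ≤ tl)

lemma mul_log_div_two_le_sum_Icc_min_one_div {t0 tl : ℕ} (ht0 : t0 ≤ tl)
    (htl : ((t0 : ℝ) + 1) ^ 2 / exp 1 ^ 2 - 1 ≤ tl) :
    t0 * log (tl + 1) / 2 ≤ ∑ τ ∈ Icc 1 tl, min 1 ((t0 : ℝ) / τ) := by
  have hlog : 2 * log (t0 + 1) - 2 ≤ log (tl + 1) := by
    have h := log_le_log (by positivity) (by linarith : ((t0 : ℝ) + 1) ^ 2 / exp 1 ^ 2 ≤ tl + 1)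
    rw [log_div (by positivity) (by positivity), log_pow, log_pow, log_exp] at h
    push_cast at h
    linarith
  rw [sum_Icc_min_one_div_eq ht0]
  have := log_sub_log_le_sum_Ioc_inv ht0
  nlinarith [(Nat.cast_nonneg t0 : (0 : ℝ) ≤ t0)]

lemma sum_Icc_min_one_div_le_mul_log {t0 tl : ℕ} (h3 : 3 ≤ t0) (ht0 : t0 ≤ tl) :
    ∑ τ ∈ Icc 1 tl, min 1 ((t0 : ℝ) / τ) ≤ t0 * log (tl + 1) := by
  have hlog0 : 1 ≤ log t0 := by
    rw [le_log_iff_exp_le (by positivity)]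
    have : (3 : ℝ) ≤ t0 := by exact_mod_cast h3
    linarith [exp_one_lt_d9]
  have hlogl : log tl ≤ log (tl + 1) :=
    log_le_log (by exact_mod_cast (by omega : 0 < tl)) (by linarith)
  rw [sum_Icc_min_one_div_eq ht0]
  have := sum_Ioc_inv_le_log_sub_log (by omega) ht0
  gcongr
  linarith

lemma sum_min_one_div_div_mem_Icc {K t0 tl : ℕ} {C0 : ℝ} (hK : 0 < K)
    (ht0 : (t0 : ℝ) = 2 * C0 * K) (h7 : 7 ≤ t0) (htl : ((t0 : ℝ) + 1) ^ 2 / exp 1 ^ 2 - 1 ≤ tl) :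
    ∑ τ ∈ Icc 1 tl, min 1 ((t0 : ℝ) / τ) / K ∈
      Set.Icc (C0 * log (tl + 1)) (2 * C0 * log (tl + 1)) := by
  have htl0 := le_of_sq_div_exp_sq_sub_one_le h7 htl
  have hK' : (0 : ℝ) < K := by exact_mod_cast hK
  have hlo := mul_log_div_two_le_sum_Icc_min_one_div htl0 htl
  have hhi := sum_Icc_min_one_div_le_mul_log (by omega) htl0
  have ht0L : (t0 : ℝ) * log (tl + 1) = 2 * (C0 * log (tl + 1) * K) := by rw [ht0]; ring
  rw [← sum_div]
  constructor
  · rw [le_div_iff₀ hK']; linarith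
  · rw [div_le_iff₀ hK']; linarith

lemma le_mul_max_div {p : ℝ} (hp : 0 < p) (a b : ℝ) : b ≤ p * max a (b / p) := by
  rw [← div_le_iff₀' hp]
  exact le_max_right _ _

lemma exp_neg_le_one_div_of_log_le {x a : ℝ} (hx : 0 < x) (h : log x ≤ a) : exp (-a) ≤ 1 / x := by
  rw [one_div, ← exp_log hx, ← exp_neg, exp_le_exp]
  linarith

lemma div_lt_subset_union {Ω : Type*} {n a : Ω → ℝ} {c p L : ℝ} (hcL : 0 < c * L) (hp : 0 ≤ p) :
    {ω | a ω / n ω < p / 12} ⊆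
      ({ω | n ω ≤ c * L / 2} ∪ {ω | 3 * (2 * c * L) ≤ n ω}) ∪ {ω | a ω ≤ p * c * L / 2} := by
  intro ω hω
  by_contra hout
  simp only [Set.mem_union, Set.mem_ofPred_eq, not_or, not_le] at hout hω
  obtain ⟨⟨hn_lo, hn_hi⟩, ha⟩ := hout
  rw [div_lt_iff₀ (by linarith)] at hω
  nlinarith

section

variable {Ω ι : Type*} [MeasurableSpace Ω] {μ : Measure Ω}

lemma _root_.ProbabilityTheory.iIndepFun.indicator_preimage {β : Type*} [MeasurableSpace β]
    {Y : ι → Ω → β} (h : iIndepFun Y μ) {S : Set β} (hS : MeasurableSet S) :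
    iIndepFun (fun i => (Y i ⁻¹' S).indicator fun _ => (1 : ℝ)) μ :=
  h.comp (fun _ => S.indicator fun _ => (1 : ℝ)) fun _ => measurable_const.indicator hS

lemma mul_sum_measureReal_le_sum_measureReal_inter_preimage [IsFiniteMeasure μ]
    {β γ : Type*} [MeasurableSpace β] [MeasurableSpace γ] {f : ι → Ω → β} {g : ι → Ω → γ}
    (hfg : ∀ i, IndepFun (f i) (g i) μ) {S : Set β} {T : Set γ} (hS : MeasurableSet S)
    (hT : MeasurableSet T) {p : ℝ} (hp : ∀ i, ENNReal.ofReal p ≤ μ (g i ⁻¹' T)) (s : Finset ι) :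
    p * ∑ i ∈ s, μ.real (f i ⁻¹' S) ≤ ∑ i ∈ s, μ.real (f i ⁻¹' S ∩ g i ⁻¹' T) := by
  rw [mul_sum]
  refine sum_le_sum fun i _ => ?_
  rw [measureReal_def, measureReal_def, (hfg i).measure_inter_preimage_eq_mul _ _ hS hT,
    ENNReal.toReal_mul, mul_comm]
  exact mul_le_mul_of_nonneg_left
    ((ENNReal.ofReal_le_iff_le_toReal (measure_ne_top _ _)).1 (hp i)) ENNReal.toReal_nonneg

lemma measure_le_ofReal_of_measureReal_le [IsFiniteMeasure μ] {s : Set Ω} {r : ℝ}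
    (h : μ.real s ≤ r) : μ s ≤ ENNReal.ofReal r :=
  (ofReal_measureReal).symm.le.trans (ENNReal.ofReal_le_ofReal h)

lemma forced_sample_bounds_of_tail_bounds [IsFiniteMeasure μ] {n a : Ω → ℝ} {c p L x : ℝ}
    (hcL : 0 < c * L) (hp : 0 ≤ p)
    (hn_lo : μ.real {ω | n ω ≤ c * L / 2} ≤ 1 / x)
    (hn_hi : μ.real {ω | 3 * (2 * c * L) ≤ n ω} ≤ 1 / x)
    (ha_lo : μ.real {ω | a ω ≤ p * c * L / 2} ≤ 1 / x) :
    μ {ω | n ω < c * L / 2 ∨ 3 * (2 * c) * L < n ω} ≤ ENNReal.ofReal (2 / x) ∧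
      μ {ω | a ω < p * c * L / 2} ≤ ENNReal.ofReal (1 / x) ∧
      μ {ω | a ω / n ω < p / 12} ≤ ENNReal.ofReal (3 / x) := by
  have h2 : 2 / x = 1 / x + 1 / x := by ring
  have h3 : 3 / x = 1 / x + 1 / x + 1 / x := by ring
  have hn_out : {ω | n ω < c * L / 2 ∨ 3 * (2 * c) * L < n ω} ⊆
      {ω | n ω ≤ c * L / 2} ∪ {ω | 3 * (2 * c * L) ≤ n ω} := by
    rintro ω (h | h)
    · exact Or.inl h.le
    · exact Or.inr (by rw [Set.mem_ofPred_eq]; linarith)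
  refine ⟨measure_le_ofReal_of_measureReal_le ?_, measure_le_ofReal_of_measureReal_le ?_,
    measure_le_ofReal_of_measureReal_le ?_⟩
  · exact (measureReal_mono hn_out).trans ((measureReal_union_le _ _).trans (by linarith))
  · exact (measureReal_mono (Set.ofPred_subset_ofPred_of_imp fun _ => le_of_lt)).trans ha_lo
  · refine (measureReal_mono (div_lt_subset_union hcL hp)).trans ?_
    exact (measureReal_union_le _ _).trans
      (add_le_add ((measureReal_union_le _ _).trans (by linarith)) ha_lo |>.trans h3.ge)

lemma integrable_exp_mul_indicator_one [IsFiniteMeasure μ] {A : Set Ω} (hA : MeasurableSet A)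
    (t : ℝ) : Integrable (fun ω => exp (t * A.indicator (fun _ => (1 : ℝ)) ω)) μ := by
  refine .of_bound (by fun_prop (disch := exact hA)) (exp |t|) (ae_of_all _ fun ω => ?_)
  by_cases h : ω ∈ A <;> simp [h, le_abs_self]

lemma integrable_exp_mul_sum_indicator_one [IsFiniteMeasure μ] {A : ι → Set Ω}
    (hA : ∀ i, MeasurableSet (A i))
    (hind : iIndepFun (fun i => (A i).indicator fun _ => (1 : ℝ)) μ) (s : Finset ι) (t : ℝ) :
    Integrable (fun ω => exp (t * (∑ i ∈ s, (A i).indicator fun _ => (1 : ℝ)) ω)) μ :=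
  hind.integrable_exp_mul_sum (fun i => measurable_const.indicator (hA i))
    fun i _ => integrable_exp_mul_indicator_one (hA i) t

variable [IsProbabilityMeasure μ]

lemma mgf_indicator_one {A : Set Ω} (hA : MeasurableSet A) (t : ℝ) :
    mgf (A.indicator fun _ => (1 : ℝ)) μ t = 1 + μ.real A * (exp t - 1) := by
  have h : (fun ω => exp (t * A.indicator (fun _ => (1 : ℝ)) ω))
      = fun ω => 1 + A.indicator (fun _ => exp t - 1) ω := by
    ext ω
    by_cases h : ω ∈ A <;> simp [h]
  rw [mgf, h, integral_add (integrable_const 1) ((integrable_const _).indicator hA),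
    integral_indicator_const _ hA]
  simp

lemma mgf_indicator_one_le {A : Set Ω} (hA : MeasurableSet A) (t : ℝ) :
    mgf (A.indicator fun _ => (1 : ℝ)) μ t ≤ exp (μ.real A * (exp t - 1)) := by
  rw [mgf_indicator_one hA, add_comm]
  exact add_one_le_exp _

variable {A : ι → Set Ω}

lemma mgf_sum_indicator_one_le (hA : ∀ i, MeasurableSet (A i))
    (hind : iIndepFun (fun i => (A i).indicator fun _ => (1 : ℝ)) μ) (s : Finset ι) (t : ℝ) :
    mgf (∑ i ∈ s, (A i).indicator fun _ => (1 : ℝ)) μ t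
      ≤ exp ((exp t - 1) * ∑ i ∈ s, μ.real (A i)) := by
  rw [hind.mgf_sum (fun i => measurable_const.indicator (hA i)), mul_sum, exp_sum]
  refine prod_le_prod (fun i _ => mgf_nonneg) fun i _ => ?_
  rw [mul_comm]
  exact mgf_indicator_one_le (hA i) t

lemma measureReal_sum_indicator_one_le_half_le (hA : ∀ i, MeasurableSet (A i))
    (hind : iIndepFun (fun i => (A i).indicator fun _ => (1 : ℝ)) μ) (s : Finset ι) {a : ℝ}
    (ha : a ≤ ∑ i ∈ s, μ.real (A i)) :
    μ.real {ω | ∑ i ∈ s, (A i).indicator (fun _ => (1 : ℝ)) ω ≤ a / 2} ≤ exp (-(a / 8)) := by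
  rcases lt_or_ge a 0 with ha0 | ha0
  · exact measureReal_le_one.trans (one_le_exp (by linarith))
  have h := measure_le_le_exp_mul_mgf (a / 2) (by norm_num : (-1 : ℝ) ≤ 0)
    (integrable_exp_mul_sum_indicator_one hA hind s (-1))
  simp only [Finset.sum_apply] at h
  calc _ ≤ exp (a / 2) * exp ((exp (-1) - 1) * ∑ i ∈ s, μ.real (A i)) := by
        rw [neg_neg, one_mul] at h
        exact h.trans (by gcongr; exact mgf_sum_indicator_one_le hA hind s (-1))
    _ ≤ exp (-(a / 8)) := by
        rw [← exp_add, exp_le_exp]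
        nlinarith [exp_neg_one_lt_d9]

lemma measureReal_three_mul_le_sum_indicator_one_le (hA : ∀ i, MeasurableSet (A i))
    (hind : iIndepFun (fun i => (A i).indicator fun _ => (1 : ℝ)) μ) (s : Finset ι) {b : ℝ}
    (hb : ∑ i ∈ s, μ.real (A i) ≤ b) :
    μ.real {ω | 3 * b ≤ ∑ i ∈ s, (A i).indicator (fun _ => (1 : ℝ)) ω} ≤ exp (-b) := by
  have hb0 : 0 ≤ b := (sum_nonneg fun i _ => measureReal_nonneg).trans hb
  have h := measure_ge_le_exp_mul_mgf (3 * b) zero_le_one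
    (integrable_exp_mul_sum_indicator_one hA hind s 1)
  simp only [Finset.sum_apply] at h
  calc _ ≤ exp (-(3 * b)) * exp ((exp 1 - 1) * ∑ i ∈ s, μ.real (A i)) := by
        rw [neg_one_mul] at h
        exact h.trans (by gcongr; exact mgf_sum_indicator_one_le hA hind s 1)
    _ ≤ exp (-b) := by
        rw [← exp_add, exp_le_exp]
        nlinarith [exp_one_lt_d9, mul_le_mul_of_nonneg_left hb (by linarith [exp_one_gt_d9] :
          0 ≤ exp 1 - 1)]

end

theorem forced_sample_region_bounds_general
    {Ω E : Type*} [mΩ : MeasurableSpace Ω] [MeasurableSpace E]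
    (μ : Measure Ω) [IsProbabilityMeasure μ]
    (K tl t0 : ℕ) (C0 pstar : ℝ) (hK : 2 ≤ K)
    (hpstar : pstar ∈ Set.Ioc (0 : ℝ) 1)
    (hC0 : C0 = max 10 (8 / pstar))
    (ht0 : (t0 : ℝ) = 2 * C0 * K)
    (htl : ((t0 : ℝ) + 1) ^ 2 / Real.exp 1 ^ 2 - 1 ≤ (tl : ℝ))
    -- forced-sampling indicators for arm `k`
    (B : ℕ → Ω → Bool) (hBmeas : ∀ τ, Measurable (B τ))
    (hB : ∀ τ ∈ Finset.Icc 1 tl,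
      μ {ω | B τ ω = true} = ENNReal.ofReal (min 1 ((t0 : ℝ) / τ) / K))
    -- i.i.d. covariates, independent of the forced-sampling indicators
    (X : ℕ → Ω → E) (hXmeas : ∀ τ, Measurable (X τ))
    (PX : Measure E)
    (hXlaw : ∀ τ, Measure.map (X τ) μ = PX)
    (hindep : iIndepFun (fun τ ω => (B τ ω, X τ ω)) μ)
    (hBX : ∀ τ, IndepFun (B τ) (X τ) μ)
    -- the region `V`
    (V : Set E) (hV : MeasurableSet V) (hpV : ENNReal.ofReal pstar ≤ PX V) :
    (μ {ω | (∑ τ ∈ Finset.Icc 1 tl, if B τ ω then (1 : ℝ) else 0) <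
            C0 * Real.log ((tl : ℝ) + 1) / 2 ∨
          3 * (2 * C0) * Real.log ((tl : ℝ) + 1) <
            (∑ τ ∈ Finset.Icc 1 tl, if B τ ω then (1 : ℝ) else 0)} ≤
        ENNReal.ofReal (2 / ((tl : ℝ) + 1))) ∧
    (μ {ω | (∑ τ ∈ Finset.Icc 1 tl,
            Set.indicator {ω' | B τ ω' = true ∧ X τ ω' ∈ V} (fun _ => (1 : ℝ)) ω) <
          pstar * C0 * Real.log ((tl : ℝ) + 1) / 2} ≤
        ENNReal.ofReal (1 / ((tl : ℝ) + 1))) ∧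
    (μ {ω | (∑ τ ∈ Finset.Icc 1 tl,
            Set.indicator {ω' | B τ ω' = true ∧ X τ ω' ∈ V} (fun _ => (1 : ℝ)) ω) /
          (∑ τ ∈ Finset.Icc 1 tl, if B τ ω then (1 : ℝ) else 0) < pstar / 12} ≤
        ENNReal.ofReal (3 / ((tl : ℝ) + 1))) := by
  obtain ⟨hp0, -⟩ := hpstar
  have hC0_10 : 10 ≤ C0 := hC0 ▸ le_max_left _ _
  have hpC0 : 8 ≤ pstar * C0 := hC0 ▸ le_mul_max_div hp0 10 8
  have h7 : 7 ≤ t0 := by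
    have : (2 : ℝ) ≤ K := by exact_mod_cast hK
    exact_mod_cast (by nlinarith : (7 : ℝ) ≤ t0)
  have hL : 0 < log ((tl : ℝ) + 1) := by
    have := le_of_sq_div_exp_sq_sub_one_le h7 htl
    exact log_pos (by norm_cast; omega)
  have hA₁ : ∀ τ, MeasurableSet {ω | B τ ω = true} := fun τ => hBmeas τ (measurableSet_singleton _)
  have hind₁ := hindep.indicator_preimage (S := {q | q.1 = true})
    (measurable_fst (measurableSet_singleton true))
  have hind₂ := hindep.indicator_preimage (S := {q | q.1 = true ∧ q.2 ∈ V})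
    ((measurable_fst (measurableSet_singleton true)).inter (measurable_snd hV))
  have hmean : ∑ τ ∈ Icc 1 tl, μ.real {ω | B τ ω = true} ∈
      Set.Icc (C0 * log ((tl : ℝ) + 1)) (2 * C0 * log ((tl : ℝ) + 1)) := by
    rw [sum_congr rfl fun τ hτ => by
      rw [measureReal_def, hB τ hτ, ENNReal.toReal_ofReal (by positivity)]]
    exact sum_min_one_div_div_mem_Icc (by omega) ht0 h7 htl
  have hmean₂ : pstar * C0 * log ((tl : ℝ) + 1) ≤
      ∑ τ ∈ Icc 1 tl, μ.real {ω | B τ ω = true ∧ X τ ω ∈ V} :=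
    (mul_assoc _ _ _).trans_le <| (mul_le_mul_of_nonneg_left hmean.1 hp0.le).trans <|
      mul_sum_measureReal_le_sum_measureReal_inter_preimage hBX (measurableSet_singleton true) hV
        (fun τ => by rwa [← Measure.map_apply (hXmeas τ) hV, hXlaw τ]) _
  have htl1 : (0 : ℝ) < tl + 1 := by positivity
  simp only [show ∀ τ ω, (if B τ ω then (1 : ℝ) else 0) =
    {ω | B τ ω = true}.indicator (fun _ => 1) ω from fun τ ω => by simp [Set.indicator_apply]]
  refine forced_sample_bounds_of_tail_bounds (mul_pos (by linarith) hL) hp0.le ?_ ?_ ?_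
  · exact (measureReal_sum_indicator_one_le_half_le hA₁ hind₁ _ hmean.1).trans
      (exp_neg_le_one_div_of_log_le htl1 (by nlinarith))
  · exact (measureReal_three_mul_le_sum_indicator_one_le hA₁ hind₁ _ hmean.2).trans
      (exp_neg_le_one_div_of_log_le htl1 (by nlinarith))
  · exact (measureReal_sum_indicator_one_le_half_le
      (fun τ => (hA₁ τ).inter (hXmeas τ hV)) hind₂ _ hmean₂).trans
      (exp_neg_le_one_div_of_log_le htl1 (by nlinarith))

/-- bounds on the forced-sample size `n_k` and on the number `|A'|` of forced
samples whose covariate falls in the region `V`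
(Lemma D.2 / Lemma EC.8 of Wang et al., as restated in the paper). -/
theorem forced_sample_region_bounds
    {Ω E : Type*} [mΩ : MeasurableSpace Ω] [MeasurableSpace E]
    (μ : Measure Ω) [IsProbabilityMeasure μ]
    (K tl t0 : ℕ) (C0 pstar : ℝ) (hK : 2 ≤ K)
    (hpstar : pstar ∈ Set.Ioc (0 : ℝ) 1)
    (hC0 : C0 = max 10 (8 / pstar))
    (ht0 : (t0 : ℝ) = 2 * C0 * K)
    (htl : ((t0 : ℝ) + 1) ^ 2 / Real.exp 1 ^ 2 - 1 ≤ (tl : ℝ))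
    -- forced-sampling indicators for arm `k`
    (B : ℕ → Ω → Bool) (hBmeas : ∀ τ, Measurable (B τ))
    (hB : ∀ τ ∈ Finset.Icc 1 tl,
      μ {ω | B τ ω = true} = ENNReal.ofReal (min 1 ((t0 : ℝ) / τ) / K))
    -- i.i.d. covariates, independent of the forced-sampling indicators
    (X : ℕ → Ω → E) (hXmeas : ∀ τ, Measurable (X τ))
    (PX : Measure E) [IsProbabilityMeasure PX]
    (hXlaw : ∀ τ, Measure.map (X τ) μ = PX)
    (hindep : iIndepFun (fun τ ω => (B τ ω, X τ ω)) μ)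
    (hBX : ∀ τ, IndepFun (B τ) (X τ) μ)
    -- the region `V`
    (V : Set E) (hV : MeasurableSet V) (hpV : ENNReal.ofReal pstar ≤ PX V) :
    (μ {ω | (∑ τ ∈ Finset.Icc 1 tl, if B τ ω then (1 : ℝ) else 0) <
            C0 * Real.log ((tl : ℝ) + 1) / 2 ∨
          3 * (2 * C0) * Real.log ((tl : ℝ) + 1) <
            (∑ τ ∈ Finset.Icc 1 tl, if B τ ω then (1 : ℝ) else 0)} ≤
        ENNReal.ofReal (2 / ((tl : ℝ) + 1))) ∧
    (μ {ω | (∑ τ ∈ Finset.Icc 1 tl,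
            Set.indicator {ω' | B τ ω' = true ∧ X τ ω' ∈ V} (fun _ => (1 : ℝ)) ω) <
          pstar * C0 * Real.log ((tl : ℝ) + 1) / 2} ≤
        ENNReal.ofReal (1 / ((tl : ℝ) + 1))) ∧
    (μ {ω | (∑ τ ∈ Finset.Icc 1 tl,
            Set.indicator {ω' | B τ ω' = true ∧ X τ ω' ∈ V} (fun _ => (1 : ℝ)) ω) /
          (∑ τ ∈ Finset.Icc 1 tl, if B τ ω then (1 : ℝ) else 0) < pstar / 12} ≤
        ENNReal.ofReal (3 / ((tl : ℝ) + 1))) :=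
  forced_sample_region_bounds_general (mΩ := mΩ) μ K tl t0 C0 pstar hK hpstar hC0 ht0 htl B hBmeas
    hB X hXmeas PX hXlaw hindep hBX V hV hpV

end BanditPaper
end
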